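/- Under the same setting (CEMPT $T$ on an infinite $\sigma$-finite measure space, $Y$ of finite positive measure, $\varphi$ the first return time, $S_n^Y=\sum_{k=1}^n 1_Y\circ T^k$, $Q^Y(s)=\sum_{n\ge0}e^{-ns}\mu(Y\cap\{\varphi>n\})$): for $s_1>0$ and $s_2\ge0$, $(1-e^{-s_2})\int_Y\sum_{n\ge0}e^{-ns_1}e^{-s_2S_n^Y}\,d\mu + (1-e^{-s_1})e^{-s_2}\int_Y\big(\sum_{n\ge0}e^{-ns_1}e^{-s_2S_n^Y}\big)\big(\sum_{n\ge0}e^{-ns_1}\hat T^n 1_{Y_n}\big)\,d\mu = Q^Y(s_1)$. -/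

import Mathlib

/-!
Write `A = e^{-s₁}`, `B = e^{-s₂}`, `G(x) = ∑ₙ Aⁿ B^{Sₙ(x)}` and let
`H(x) = ∑ₘ Aᵐ 1{x enters Y by time m} B^{Sₘ(x)}`. Decomposing `H` according to the entrance
time `τ(x)` into `Y` gives `H = B P + (1 - B) 1_Y G` with `P(x) = A^τ G(T^τ x)`, and by duality
`∫ P` is the integral of `G ∑ₙ Aⁿ T̂ⁿ 1_{Yₙ}` over `Y`. Decomposing `H` according to the first
step gives `H = 1_Y ∑ₙ Aⁿ 1{φ > n} + A B P ∘ T`. Integrating both and using the invariance of `μ`,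
`Q^Y(s₁) + A B ∫ P = B ∫ P + (1 - B) ∫_Y G`; since `μ Y < ∞`, `∫ P` is finite and cancels.
-/

open MeasureTheory Filter Real Set
open scoped Topology ENNReal

/-- First return time to `Y` (value `⊤` if the orbit never returns). -/
noncomputable def firstReturn {X : Type*} (T : X → X) (Y : Set X) (x : X) : ℕ∞ :=
  ⨅ (k : ℕ) (_ : 1 ≤ k ∧ T^[k] x ∈ Y), (k : ℕ∞)

/-- The sets `Y₀ = Y`, `Yₙ = Yᶜ ∩ {φ = n}`. -/
noncomputable def Ypart {X : Type*} (T : X → X) (Y : Set X) : ℕ → Set X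
  | 0 => Y
  | (n+1) => Yᶜ ∩ {x | firstReturn T Y x = ((n+1 : ℕ) : ℕ∞)}

/-- Laplace transform `Q^Y(s)` of the increments of the wandering rate. -/
noncomputable def QY {X : Type*} [MeasurableSpace X] (T : X → X) (Y : Set X)
    (μ : Measure X) (s : ℝ) : ℝ≥0∞ :=
  ∑' n : ℕ, ENNReal.ofReal (Real.exp (-(n : ℝ) * s)) *
    μ (Y ∩ {x | (n : ℕ∞) < firstReturn T Y x})

/-- Occupation time of `Y` by the orbit between times `1` and `n`. -/
noncomputable def occTime {X : Type*} (T : X → X) (A : Set X) (n : ℕ) (x : X) : ℕ :=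
  ∑ k ∈ Finset.Icc 1 n, A.indicator (fun _ => (1:ℕ)) (T^[k] x)

open Function

section ReturnTimes

variable {X : Type*} {T : X → X} {Y : Set X} {x : X}

lemma firstReturn_le_iff (j : ℕ) :
    firstReturn T Y x ≤ j ↔ ∃ k, 1 ≤ k ∧ k ≤ j ∧ T^[k] x ∈ Y := by
  refine ⟨fun h => ?_, fun ⟨k, hk, hkj, hkY⟩ => (iInf₂_le k ⟨hk, hkY⟩).trans (Nat.cast_le.2 hkj)⟩
  by_contra! hnot
  have : ((j + 1 : ℕ) : ℕ∞) ≤ firstReturn T Y x :=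
    le_iInf₂ fun k hk => Nat.cast_le.2 (by by_contra! hkj; exact hnot k hk.1 (by omega) hk.2)
  exact absurd (this.trans h) (by norm_cast; omega)

lemma lt_firstReturn_iff (j : ℕ) :
    j < firstReturn T Y x ↔ ∀ k, 1 ≤ k → k ≤ j → T^[k] x ∉ Y := by
  rw [← not_le, firstReturn_le_iff]
  push Not
  rfl

lemma mem_Ypart_iff (n : ℕ) :
    x ∈ Ypart T Y n ↔ T^[n] x ∈ Y ∧ ∀ k < n, T^[k] x ∉ Y := by
  cases n with
  | zero => simp [Ypart]
  | succ n =>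
    have hφ : firstReturn T Y x = (n + 1 : ℕ) ↔
        (n : ℕ∞) < firstReturn T Y x ∧ firstReturn T Y x ≤ (n + 1 : ℕ) := by
      rw [le_antisymm_iff, and_comm, Nat.cast_succ, ENat.add_one_le_iff (ENat.natCast_ne_top n)]
    simp only [Ypart, Set.mem_inter_iff, Set.mem_compl_iff, Set.mem_ofPred_eq, hφ,
      lt_firstReturn_iff, firstReturn_le_iff]
    constructor
    · rintro ⟨hx, hnot, k, hk, hkn, hkY⟩
      obtain rfl : k = n + 1 := by by_contra h; exact hnot k hk (by omega) hkY
      refine ⟨hkY, fun j hj => ?_⟩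
      rcases j with _ | j
      · exact hx
      · exact hnot _ (by omega) (by omega)
    · rintro ⟨hY, hnot⟩
      exact ⟨hnot 0 (by omega), fun k hk hkn => hnot k (by omega), n + 1, by omega, le_rfl, hY⟩

lemma Ypart_subset_preimage_iterate (n : ℕ) : Ypart T Y n ⊆ T^[n] ⁻¹' Y :=
  fun _ hx => ((mem_Ypart_iff n).1 hx).1

lemma pairwise_disjoint_Ypart : Pairwise (Disjoint on Ypart T Y) := by
  intro m n hmn
  refine Set.disjoint_left.2 fun x hm hn => ?_
  rw [mem_Ypart_iff] at hm hn
  rcases hmn.lt_or_gt with h | h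
  · exact hn.2 m h hm.1
  · exact hm.2 n h hn.1

lemma exists_mem_Ypart (h : ∃ k, T^[k] x ∈ Y) : ∃ n, x ∈ Ypart T Y n := by
  classical
  exact ⟨Nat.find h, (mem_Ypart_iff _).2 ⟨Nat.find_spec h, fun _ => Nat.find_min h⟩⟩

end ReturnTimes

section OccupationTime

variable {X : Type*} {T : X → X} {Y : Set X} {x : X}

lemma occTime_succ (n : ℕ) (x : X) :
    occTime T Y (n + 1) x = occTime T Y n x + Y.indicator (fun _ => 1) (T^[n + 1] x) :=
  Finset.sum_Icc_succ_top (by omega) _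

lemma occTime_add (n m : ℕ) (x : X) :
    occTime T Y (n + m) x = occTime T Y n x + occTime T Y m (T^[n] x) := by
  induction m with
  | zero => simp [occTime]
  | succ m ih =>
    rw [← add_assoc, occTime_succ, ih, occTime_succ, add_assoc, ← iterate_add_apply,
      show m + 1 + n = n + m + 1 by omega]

lemma occTime_succ' (m : ℕ) (x : X) :
    occTime T Y (m + 1) x = Y.indicator (fun _ => 1) (T x) + occTime T Y m (T x) := by
  rw [add_comm m, occTime_add, occTime_succ]
  simp [occTime]

lemma occTime_eq_zero_iff (n : ℕ) : occTime T Y n x = 0 ↔ (n : ℕ∞) < firstReturn T Y x := by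
  simp [occTime, Finset.sum_eq_zero_iff, lt_firstReturn_iff, and_imp]

lemma indicator_add_occTime_of_mem_Ypart {n : ℕ} (hx : x ∈ Ypart T Y n) :
    Y.indicator (fun _ => 1) x + occTime T Y n x = 1 := by
  rw [mem_Ypart_iff] at hx
  cases n with
  | zero => simp [occTime, Set.indicator_of_mem (show x ∈ Y from hx.1)]
  | succ n =>
    have hS : occTime T Y n x = 0 :=
      (occTime_eq_zero_iff n).2 ((lt_firstReturn_iff n).2 fun k _ hk => hx.2 k (by omega))
    rw [Set.indicator_of_notMem (show x ∉ Y from hx.2 0 n.succ_pos), occTime_succ, hS,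
      Set.indicator_of_mem hx.1]

end OccupationTime

section HitWithin

variable {X : Type*} {T : X → X} {Y : Set X} {x : X} {m : ℕ}

def hitWithin (T : X → X) (Y : Set X) (m : ℕ) : Set X := ⋃ k ≤ m, T^[k] ⁻¹' Y

lemma mem_hitWithin : x ∈ hitWithin T Y m ↔ ∃ k ≤ m, T^[k] x ∈ Y := by
  simp [hitWithin]

lemma hitWithin_zero : hitWithin T Y 0 = Y := by
  ext x
  simp [mem_hitWithin]

lemma mem_hitWithin_succ : x ∈ hitWithin T Y (m + 1) ↔ x ∈ Y ∨ T x ∈ hitWithin T Y m := by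
  simp only [mem_hitWithin]
  constructor
  · rintro ⟨_ | k, hk, hkY⟩
    · exact Or.inl hkY
    · exact Or.inr ⟨k, by omega, hkY⟩
  · rintro (hx | ⟨k, hk, hkY⟩)
    · exact ⟨0, by omega, hx⟩
    · exact ⟨k + 1, by omega, hkY⟩

lemma succ_lt_firstReturn_iff :
    ((m + 1 : ℕ) : ℕ∞) < firstReturn T Y x ↔ T x ∉ hitWithin T Y m := by
  rw [lt_firstReturn_iff, mem_hitWithin]
  constructor
  · rintro h ⟨k, hk, hkY⟩
    exact h (k + 1) (by omega) (by omega) hkY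
  · rintro h (_ | k) hk hkm hkY
    · omega
    · exact h ⟨k, by omega, hkY⟩

lemma mem_hitWithin_iff_of_mem_Ypart {n : ℕ} (hx : x ∈ Ypart T Y n) :
    x ∈ hitWithin T Y m ↔ n ≤ m := by
  rw [mem_Ypart_iff] at hx
  rw [mem_hitWithin]
  refine ⟨fun ⟨k, hk, hkY⟩ => ?_, fun h => ⟨n, h, hx.1⟩⟩
  by_contra! h
  exact hx.2 k (by omega) hkY

lemma exists_mem_Ypart_of_mem_hitWithin (hx : x ∈ hitWithin T Y m) : ∃ n, x ∈ Ypart T Y n :=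
  let ⟨k, _, hkY⟩ := mem_hitWithin.1 hx
  exists_mem_Ypart ⟨k, hkY⟩

end HitWithin

section Measurability

variable {X : Type*} [MeasurableSpace X] {T : X → X} {Y : Set X}

lemma measurable_occTime (hT : Measurable T) (hY : MeasurableSet Y) (n : ℕ) :
    Measurable (occTime T Y n) :=
  Finset.measurable_sum _ fun k _ => (measurable_const.indicator hY).comp (hT.iterate k)

lemma measurableSet_lt_firstReturn (hT : Measurable T) (hY : MeasurableSet Y) (n : ℕ) :
    MeasurableSet {x | (n : ℕ∞) < firstReturn T Y x} := by
  simp_rw [← occTime_eq_zero_iff]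
  exact measurable_occTime hT hY n (measurableSet_singleton 0)

lemma measurableSet_Ypart (hT : Measurable T) (hY : MeasurableSet Y) (n : ℕ) :
    MeasurableSet (Ypart T Y n) := by
  have : Ypart T Y n = T^[n] ⁻¹' Y ∩ ⋂ k < n, (T^[k] ⁻¹' Y)ᶜ := by
    ext x
    simp [mem_Ypart_iff]
  rw [this]
  exact (hY.preimage (hT.iterate n)).inter
    (.iInter fun k => .iInter fun _ => (hY.preimage (hT.iterate k)).compl)

lemma measurableSet_hitWithin (hT : Measurable T) (hY : MeasurableSet Y) (m : ℕ) :
    MeasurableSet (hitWithin T Y m) :=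
  .iUnion fun k => .iUnion fun _ => hY.preimage (hT.iterate k)

end Measurability

section Laplace

variable {X : Type*} {T : X → X} {Y : Set X} {A B : ℝ≥0∞} {x : X}

noncomputable def occTimeLaplace (T : X → X) (Y : Set X) (A B : ℝ≥0∞) (x : X) : ℝ≥0∞ :=
  ∑' n, A ^ n * B ^ occTime T Y n x

noncomputable def hitLaplace (T : X → X) (Y : Set X) (A B : ℝ≥0∞) (x : X) : ℝ≥0∞ :=
  ∑' m, A ^ m * (hitWithin T Y m).indicator (fun y => B ^ occTime T Y m y) x

noncomputable def entryLaplace (T : X → X) (Y : Set X) (A B : ℝ≥0∞) (x : X) : ℝ≥0∞ :=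
  ∑' n, A ^ n * (Ypart T Y n).indicator (fun y => occTimeLaplace T Y A B (T^[n] y)) x

lemma occTimeLaplace_le (hB : B ≤ 1) (x : X) : occTimeLaplace T Y A B x ≤ (1 - A)⁻¹ := by
  rw [← ENNReal.tsum_geometric]
  exact ENNReal.tsum_le_tsum fun n => mul_le_of_le_one_right' (pow_le_one₀ zero_le hB)

lemma tsum_pow_mul_pow_occTime_add (n : ℕ) (x : X) :
    ∑' k, A ^ (k + n) * B ^ occTime T Y (k + n) x =
      A ^ n * B ^ occTime T Y n x * occTimeLaplace T Y A B (T^[n] x) := by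
  rw [occTimeLaplace, ← ENNReal.tsum_mul_left]
  refine tsum_congr fun k => ?_
  rw [add_comm k, occTime_add, pow_add, pow_add]
  ring

lemma hitLaplace_of_mem_Ypart {n : ℕ} (hx : x ∈ Ypart T Y n) :
    hitLaplace T Y A B x = A ^ n * B ^ occTime T Y n x * occTimeLaplace T Y A B (T^[n] x) := by
  rw [hitLaplace, ← tsum_pow_mul_pow_occTime_add,
    ← ENNReal.summable.sum_add_tsum_nat_add' (k := n), Finset.sum_eq_zero, zero_add]
  · refine tsum_congr fun k => ?_
    rw [Set.indicator_of_mem ((mem_hitWithin_iff_of_mem_Ypart hx).2 (by omega))]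
  · intro m hm
    have hmn : ¬n ≤ m := not_le.2 (Finset.mem_range.1 hm)
    rw [Set.indicator_of_notMem fun h => hmn ((mem_hitWithin_iff_of_mem_Ypart hx).1 h), mul_zero]

lemma entryLaplace_of_mem_Ypart {n : ℕ} (hx : x ∈ Ypart T Y n) :
    entryLaplace T Y A B x = A ^ n * occTimeLaplace T Y A B (T^[n] x) := by
  rw [entryLaplace, tsum_eq_single n fun m hm => by
    rw [Set.indicator_of_notMem ((pairwise_disjoint_Ypart hm.symm).notMem_of_mem_left hx),
      mul_zero], Set.indicator_of_mem hx]

lemma pow_indicator_mul_hitLaplace (x : X) :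
    B ^ Y.indicator (fun _ => 1) x * hitLaplace T Y A B x = B * entryLaplace T Y A B x := by
  by_cases h : ∃ n, x ∈ Ypart T Y n
  · obtain ⟨n, hx⟩ := h
    rw [hitLaplace_of_mem_Ypart hx, entryLaplace_of_mem_Ypart hx]
    calc _ = B ^ (Y.indicator (fun _ => 1) x + occTime T Y n x) * A ^ n *
          occTimeLaplace T Y A B (T^[n] x) := by ring
      _ = _ := by rw [indicator_add_occTime_of_mem_Ypart hx]; ring
  · push Not at h
    have hE : ∀ m, x ∉ hitWithin T Y m := fun m hm =>
      let ⟨n, hn⟩ := exists_mem_Ypart_of_mem_hitWithin hm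
      h n hn
    simp [hitLaplace, entryLaplace, hE, h]

lemma hitLaplace_eq_mul_entryLaplace_add (hB : B ≤ 1) (x : X) :
    hitLaplace T Y A B x =
      B * entryLaplace T Y A B x + (1 - B) * Y.indicator (occTimeLaplace T Y A B) x := by
  rw [← pow_indicator_mul_hitLaplace]
  by_cases hx : x ∈ Y
  · have hG : hitLaplace T Y A B x = occTimeLaplace T Y A B x := tsum_congr fun m => by
      rw [Set.indicator_of_mem ((mem_hitWithin_iff_of_mem_Ypart (n := 0) hx).2 m.zero_le)]
    rw [Set.indicator_of_mem hx, Set.indicator_of_mem hx, pow_one, hG, ← add_mul,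
      add_tsub_cancel_of_le hB, one_mul]
  · simp [hx]

lemma hitLaplace_term_succ (m : ℕ) (x : X) :
    A ^ (m + 1) * (hitWithin T Y (m + 1)).indicator (fun y => B ^ occTime T Y (m + 1) y) x =
      (Y ∩ {y | ((m + 1 : ℕ) : ℕ∞) < firstReturn T Y y}).indicator (fun _ => A ^ (m + 1)) x +
        A * (B ^ Y.indicator (fun _ => 1) (T x) *
          (A ^ m * (hitWithin T Y m).indicator (fun y => B ^ occTime T Y m y) (T x))) := by
  by_cases hTx : T x ∈ hitWithin T Y m
  · have hq : x ∉ Y ∩ {y | ((m + 1 : ℕ) : ℕ∞) < firstReturn T Y y} :=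
      fun h => succ_lt_firstReturn_iff.1 h.2 hTx
    rw [Set.indicator_of_mem (mem_hitWithin_succ.2 (Or.inr hTx)), Set.indicator_of_notMem hq,
      Set.indicator_of_mem hTx, occTime_succ', pow_add, pow_succ]
    ring
  · have hφ := succ_lt_firstReturn_iff.2 hTx
    rw [Set.indicator_of_notMem hTx, mul_zero, mul_zero, mul_zero, add_zero]
    by_cases hx : x ∈ Y
    · rw [Set.indicator_of_mem (mem_hitWithin_succ.2 (Or.inl hx)),
        Set.indicator_of_mem (Set.mem_inter hx hφ), (occTime_eq_zero_iff _).2 hφ, pow_zero, mul_one]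
    · have hE : x ∉ hitWithin T Y (m + 1) := fun h => (mem_hitWithin_succ.1 h).elim hx hTx
      have hq : x ∉ Y ∩ {y | ((m + 1 : ℕ) : ℕ∞) < firstReturn T Y y} := fun h => hx h.1
      rw [Set.indicator_of_notMem hE, Set.indicator_of_notMem hq, mul_zero]

lemma hitLaplace_eq_add_comp (x : X) :
    hitLaplace T Y A B x =
      ∑' n : ℕ, (Y ∩ {y | (n : ℕ∞) < firstReturn T Y y}).indicator (fun _ => A ^ n) x +
        A * (B * entryLaplace T Y A B (T x)) := by
  have h0 : A ^ 0 * (hitWithin T Y 0).indicator (fun y => B ^ occTime T Y 0 y) x =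
      (Y ∩ {y | ((0 : ℕ) : ℕ∞) < firstReturn T Y y}).indicator (fun _ => A ^ 0) x := by
    rw [hitWithin_zero]
    by_cases hx : x ∈ Y
    · have hφ : ((0 : ℕ) : ℕ∞) < firstReturn T Y x :=
        (lt_firstReturn_iff 0).2 fun _ _ _ => by omega
      rw [Set.indicator_of_mem hx, Set.indicator_of_mem (Set.mem_inter hx hφ)]
      simp [occTime]
    · rw [Set.indicator_of_notMem hx, Set.indicator_of_notMem fun h => hx h.1, mul_zero]
  rw [tsum_eq_zero_add' ENNReal.summable, hitLaplace, tsum_eq_zero_add' ENNReal.summable, h0,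
    tsum_congr (hitLaplace_term_succ · x), ENNReal.tsum_add,
    ENNReal.tsum_mul_left, ENNReal.tsum_mul_left, add_assoc, ← pow_indicator_mul_hitLaplace,
    hitLaplace]

end Laplace

section Transfer

variable {X : Type*} [MeasurableSpace X] {μ : Measure X} {T : X → X}
  {hatT : (X → ℝ≥0∞) → X → ℝ≥0∞}

lemma measurable_iterate_transfer (hmeas : ∀ u, Measurable u → Measurable (hatT u)) (n : ℕ)
    {u : X → ℝ≥0∞} (hu : Measurable u) : Measurable (hatT^[n] u) := by
  induction n generalizing u with
  | zero => exact hu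
  | succ n ih => exact ih (hmeas u hu)

lemma lintegral_comp_iterate_mul (hT : Measurable T)
    (hmeas : ∀ u, Measurable u → Measurable (hatT u))
    (hdual : ∀ u v : X → ℝ≥0∞, Measurable u → Measurable v →
      ∫⁻ x, v (T x) * u x ∂μ = ∫⁻ x, v x * hatT u x ∂μ)
    (n : ℕ) {u v : X → ℝ≥0∞} (hu : Measurable u) (hv : Measurable v) :
    ∫⁻ x, v (T^[n] x) * u x ∂μ = ∫⁻ x, v x * hatT^[n] u x ∂μ := by
  induction n generalizing u with
  | zero => rfl
  | succ n ih =>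
    exact (hdual u (fun y => v (T^[n] y)) hu (hv.comp (hT.iterate n))).trans (ih (hmeas u hu))

end Transfer

section Integrals

variable {X : Type*} [MeasurableSpace X] {μ : Measure X} {T : X → X} {Y : Set X}
  {A B : ℝ≥0∞}

lemma measurable_occTimeLaplace (hT : Measurable T) (hY : MeasurableSet Y) :
    Measurable (occTimeLaplace T Y A B) :=
  .tsum fun n => (measurable_from_nat.comp (measurable_occTime hT hY n)).const_mul _

lemma measurable_entryLaplace (hT : Measurable T) (hY : MeasurableSet Y) :
    Measurable (entryLaplace T Y A B) :=
  .tsum fun n => ((((measurable_occTimeLaplace hT hY).comp (hT.iterate n)).indicator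
    (measurableSet_Ypart hT hY n))).const_mul _

lemma lintegral_entryLaplace (hT : Measurable T) (hY : MeasurableSet Y) :
    ∫⁻ x, entryLaplace T Y A B x ∂μ =
      ∑' n, A ^ n * ∫⁻ x in Ypart T Y n, occTimeLaplace T Y A B (T^[n] x) ∂μ := by
  have hmeas n : Measurable ((Ypart T Y n).indicator fun y => occTimeLaplace T Y A B (T^[n] y)) :=
    ((measurable_occTimeLaplace hT hY).comp (hT.iterate n)).indicator (measurableSet_Ypart hT hY n)
  simp only [entryLaplace]
  rw [lintegral_tsum fun n => ((hmeas n).const_mul _).aemeasurable]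
  refine tsum_congr fun n => ?_
  rw [lintegral_const_mul _ (hmeas n), lintegral_indicator (measurableSet_Ypart hT hY n)]

lemma setLIntegral_occTimeLaplace_mul_tsum_transfer (hT : Measurable T) (hY : MeasurableSet Y)
    {hatT : (X → ℝ≥0∞) → X → ℝ≥0∞} (hmeas : ∀ u, Measurable u → Measurable (hatT u))
    (hdual : ∀ u v : X → ℝ≥0∞, Measurable u → Measurable v →
      ∫⁻ x, v (T x) * u x ∂μ = ∫⁻ x, v x * hatT u x ∂μ) :
    ∫⁻ x in Y, occTimeLaplace T Y A B x *
        ∑' n, A ^ n * hatT^[n] ((Ypart T Y n).indicator fun _ => 1) x ∂μ =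
      ∫⁻ x, entryLaplace T Y A B x ∂μ := by
  have hG := measurable_occTimeLaplace (A := A) (B := B) hT hY
  have hP n : Measurable ((Ypart T Y n).indicator fun _ => (1 : ℝ≥0∞)) :=
    measurable_const.indicator (measurableSet_Ypart hT hY n)
  have hTP n := measurable_iterate_transfer hmeas n (hP n)
  rw [lintegral_entryLaplace hT hY, ← lintegral_indicator hY]
  have hpt x : Y.indicator (fun x => occTimeLaplace T Y A B x *
        ∑' n, A ^ n * hatT^[n] ((Ypart T Y n).indicator fun _ => 1) x) x =
      ∑' n, A ^ n * (Y.indicator (occTimeLaplace T Y A B) x *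
        hatT^[n] ((Ypart T Y n).indicator fun _ => 1) x) := by
    by_cases hx : x ∈ Y
    · simp only [Set.indicator_of_mem hx, ← ENNReal.tsum_mul_left]
      exact tsum_congr fun n => by ring
    · simp [hx]
  have hprod n : Measurable fun x => Y.indicator (occTimeLaplace T Y A B) x *
      hatT^[n] ((Ypart T Y n).indicator fun _ => 1) x := (hG.indicator hY).mul (hTP n)
  rw [lintegral_congr hpt, lintegral_tsum fun n => ((hprod n).const_mul _).aemeasurable]
  refine tsum_congr fun n => ?_
  rw [lintegral_const_mul _ (hprod n),
    ← lintegral_comp_iterate_mul hT hmeas hdual n (hP n) (hG.indicator hY),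
    ← lintegral_indicator (measurableSet_Ypart hT hY n)]
  congr 1
  refine lintegral_congr fun x => ?_
  by_cases hx : x ∈ Ypart T Y n
  · have hTx : T^[n] x ∈ Y := Ypart_subset_preimage_iterate n hx
    simp [hx, hTx]
  · simp [hx]

lemma lintegral_entryLaplace_ne_top (hT : MeasurePreserving T μ μ) (hY : MeasurableSet Y)
    (hY1 : μ Y ≠ ⊤) (hA : A < 1) (hB : B ≤ 1) :
    ∫⁻ x, entryLaplace T Y A B x ∂μ ≠ ⊤ := by
  have hle n : ∫⁻ x in Ypart T Y n, occTimeLaplace T Y A B (T^[n] x) ∂μ ≤ (1 - A)⁻¹ * μ Y :=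
    calc _ ≤ ∫⁻ _ in Ypart T Y n, (1 - A)⁻¹ ∂μ := lintegral_mono fun x => occTimeLaplace_le hB _
      _ = (1 - A)⁻¹ * μ (Ypart T Y n) := setLIntegral_const _ _
      _ ≤ (1 - A)⁻¹ * μ (T^[n] ⁻¹' Y) := by gcongr; exact Ypart_subset_preimage_iterate n
      _ = (1 - A)⁻¹ * μ Y := by rw [(hT.iterate n).measure_preimage hY.nullMeasurableSet]
  have hinv : (1 - A)⁻¹ ≠ ⊤ := ENNReal.inv_ne_top.2 (tsub_pos_of_lt hA).ne'
  rw [lintegral_entryLaplace hT.measurable hY]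
  refine ne_top_of_le_ne_top (b := ∑' n : ℕ, A ^ n * ((1 - A)⁻¹ * μ Y)) ?_
    (ENNReal.tsum_le_tsum fun n => by gcongr; exact hle n)
  rw [ENNReal.tsum_mul_right, ENNReal.tsum_geometric]
  exact ENNReal.mul_ne_top hinv (ENNReal.mul_ne_top hinv hY1)

lemma lintegral_hitLaplace_eq_add (hT : MeasurePreserving T μ μ) (hY : MeasurableSet Y) :
    ∫⁻ x, hitLaplace T Y A B x ∂μ =
      ∑' n : ℕ, A ^ n * μ (Y ∩ {x | (n : ℕ∞) < firstReturn T Y x}) +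
        A * (B * ∫⁻ x, entryLaplace T Y A B x ∂μ) := by
  have hq (n : ℕ) : MeasurableSet (Y ∩ {x | (n : ℕ∞) < firstReturn T Y x}) :=
    hY.inter (measurableSet_lt_firstReturn hT.measurable hY n)
  have hP := measurable_entryLaplace (A := A) (B := B) hT.measurable hY
  have hPT : Measurable fun x => entryLaplace T Y A B (T x) := hP.comp hT.measurable
  simp_rw [hitLaplace_eq_add_comp (A := A) (B := B)]
  rw [lintegral_add_right _ ((hPT.const_mul B).const_mul A),
    lintegral_tsum fun n => (measurable_const.indicator (hq n)).aemeasurable,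
    lintegral_const_mul _ (hPT.const_mul B), lintegral_const_mul _ hPT, hT.lintegral_comp hP]
  simp_rw [lintegral_indicator_const (hq _)]

lemma lintegral_hitLaplace_eq_mul_add (hT : Measurable T) (hY : MeasurableSet Y) (hB : B ≤ 1) :
    ∫⁻ x, hitLaplace T Y A B x ∂μ =
      B * ∫⁻ x, entryLaplace T Y A B x ∂μ + (1 - B) * ∫⁻ x in Y, occTimeLaplace T Y A B x ∂μ := by
  simp_rw [hitLaplace_eq_mul_entryLaplace_add hB]
  rw [lintegral_add_left ((measurable_entryLaplace hT hY).const_mul B),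
    lintegral_const_mul _ (measurable_entryLaplace hT hY), lintegral_const_mul',
    lintegral_indicator hY]
  exact ENNReal.sub_ne_top ENNReal.one_ne_top

theorem occTimeLaplace_renewal_identity (hT : MeasurePreserving T μ μ) (hY : MeasurableSet Y)
    (hY1 : μ Y ≠ ⊤) {hatT : (X → ℝ≥0∞) → X → ℝ≥0∞}
    (hmeas : ∀ u, Measurable u → Measurable (hatT u))
    (hdual : ∀ u v : X → ℝ≥0∞, Measurable u → Measurable v →
      ∫⁻ x, v (T x) * u x ∂μ = ∫⁻ x, v x * hatT u x ∂μ) (hA : A < 1) (hB : B ≤ 1) :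
    (1 - B) * ∫⁻ x in Y, occTimeLaplace T Y A B x ∂μ +
        (1 - A) * B * ∫⁻ x in Y, occTimeLaplace T Y A B x *
          ∑' n, A ^ n * hatT^[n] ((Ypart T Y n).indicator fun _ => 1) x ∂μ =
      ∑' n : ℕ, A ^ n * μ (Y ∩ {x | (n : ℕ∞) < firstReturn T Y x}) := by
  rw [setLIntegral_occTimeLaplace_mul_tsum_transfer hT.measurable hY hmeas hdual]
  set I := ∫⁻ x, entryLaplace T Y A B x ∂μ
  set J := ∫⁻ x in Y, occTimeLaplace T Y A B x ∂μ
  have hfin : A * (B * I) ≠ ⊤ :=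
    ENNReal.mul_ne_top (hA.trans ENNReal.one_lt_top).ne
      (ENNReal.mul_ne_top (hB.trans_lt ENNReal.one_lt_top).ne
        (lintegral_entryLaplace_ne_top hT hY hY1 hA hB))
  have hsplit : A * (B * I) + (1 - A) * (B * I) = B * I := by
    rw [← add_mul, add_tsub_cancel_of_le hA.le, one_mul]
  refine (ENNReal.add_right_inj hfin).1 ?_
  calc A * (B * I) + ((1 - B) * J + (1 - A) * B * I)
        = (A * (B * I) + (1 - A) * (B * I)) + (1 - B) * J := by ring
    _ = B * I + (1 - B) * J := by rw [hsplit]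
    _ = _ := (lintegral_hitLaplace_eq_mul_add hT.measurable hY hB).symm.trans
          ((lintegral_hitLaplace_eq_add hT hY).trans (add_comm _ _))

end Integrals

lemma ofReal_exp_neg_mul_natCast (s : ℝ) (n : ℕ) :
    ENNReal.ofReal (Real.exp (-s * n)) = ENNReal.ofReal (Real.exp (-s)) ^ n := by
  rw [← ENNReal.ofReal_pow (Real.exp_nonneg _), ← Real.exp_nat_mul, mul_comm]

lemma ofReal_exp_neg_natCast_mul (s : ℝ) (n : ℕ) :
    ENNReal.ofReal (Real.exp (-(n : ℝ) * s)) = ENNReal.ofReal (Real.exp (-s)) ^ n := by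
  rw [neg_mul_comm, mul_comm, ofReal_exp_neg_mul_natCast]

theorem stmt5_general {X : Type*} [MeasurableSpace X] {μ : Measure X}
    {T : X → X} (herg : Ergodic T μ)
    {Y : Set X} (hYm : MeasurableSet Y)
    (hY1 : μ Y < ⊤)
    (hatT : (X → ℝ≥0∞) → (X → ℝ≥0∞))
    (hatTmeas : ∀ u, Measurable u → Measurable (hatT u))
    (hatTdual : ∀ u v : X → ℝ≥0∞, Measurable u → Measurable v →
      ∫⁻ x, v (T x) * u x ∂μ = ∫⁻ x, v x * hatT u x ∂μ)
    (s1 s2 : ℝ) (hs1 : 0 < s1) (hs2 : 0 ≤ s2) :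
    (1 - ENNReal.ofReal (Real.exp (-s2))) *
      (∫⁻ x in Y, ∑' n : ℕ, ENNReal.ofReal (Real.exp (-(n : ℝ) * s1)) *
        ENNReal.ofReal (Real.exp (-s2 * occTime T Y n x)) ∂μ) +
    (1 - ENNReal.ofReal (Real.exp (-s1))) * ENNReal.ofReal (Real.exp (-s2)) *
      (∫⁻ x in Y,
        (∑' n : ℕ, ENNReal.ofReal (Real.exp (-(n : ℝ) * s1)) *
          ENNReal.ofReal (Real.exp (-s2 * occTime T Y n x))) *
        (∑' n : ℕ, ENNReal.ofReal (Real.exp (-(n : ℝ) * s1)) *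
          (hatT^[n] ((Ypart T Y n).indicator fun _ => (1:ℝ≥0∞))) x) ∂μ)
    = QY T Y μ s1 := by
  have hA : ENNReal.ofReal (Real.exp (-s1)) < 1 :=
    ENNReal.ofReal_lt_one.2 (Real.exp_lt_one_iff.2 (by linarith))
  have hB : ENNReal.ofReal (Real.exp (-s2)) ≤ 1 :=
    ENNReal.ofReal_le_one.2 (Real.exp_le_one_iff.2 (by linarith))
  simpa only [occTimeLaplace, QY, ofReal_exp_neg_natCast_mul, ofReal_exp_neg_mul_natCast] using
    occTimeLaplace_renewal_identity herg.toMeasurePreserving hYm hY1.ne hatTmeas hatTdual hA hB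

/-- Double Laplace transform identity for the occupation time `S_n^Y`. -/
theorem stmt5 {X : Type*} [MeasurableSpace X] {μ : Measure X} [SigmaFinite μ]
    {T : X → X} (hcons : Conservative T μ) (herg : Ergodic T μ)
    (hinf : μ Set.univ = ⊤) {Y : Set X} (hYm : MeasurableSet Y)
    (hY0 : 0 < μ Y) (hY1 : μ Y < ⊤)
    (hatT : (X → ℝ≥0∞) → (X → ℝ≥0∞))
    (hatTmeas : ∀ u, Measurable u → Measurable (hatT u))
    (hatTdual : ∀ u v : X → ℝ≥0∞, Measurable u → Measurable v →
      ∫⁻ x, v (T x) * u x ∂μ = ∫⁻ x, v x * hatT u x ∂μ)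
    (s1 s2 : ℝ) (hs1 : 0 < s1) (hs2 : 0 ≤ s2) :
    (1 - ENNReal.ofReal (Real.exp (-s2))) *
      (∫⁻ x in Y, ∑' n : ℕ, ENNReal.ofReal (Real.exp (-(n : ℝ) * s1)) *
        ENNReal.ofReal (Real.exp (-s2 * occTime T Y n x)) ∂μ) +
    (1 - ENNReal.ofReal (Real.exp (-s1))) * ENNReal.ofReal (Real.exp (-s2)) *
      (∫⁻ x in Y,
        (∑' n : ℕ, ENNReal.ofReal (Real.exp (-(n : ℝ) * s1)) *
          ENNReal.ofReal (Real.exp (-s2 * occTime T Y n x))) *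
        (∑' n : ℕ, ENNReal.ofReal (Real.exp (-(n : ℝ) * s1)) *
          (hatT^[n] ((Ypart T Y n).indicator fun _ => (1:ℝ≥0∞))) x) ∂μ)
    = QY T Y μ s1 :=
  stmt5_general herg hYm hY1 hatT hatTmeas hatTdual s1 s2 hs1 hs2
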